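/- arXiv:0706.0377 — 2 statements merged into one kernel-verified Lean document; each statement's English description precedes it below -/
import Mathlib

section
/- Let R be a commutative ring, M an R-module, and ψ₁,…,ψ_r ∈ Hom_R(M,R). Let ψ = ψ₁ ⊕ ⋯ ⊕ ψ_r : M → R^r and let Ψ = ψ₁ ∧ ⋯ ∧ ψ_r : ⋀^{r+1} M → M be the map defined by iterated contraction, i.e. Ψ(m₁ ∧ ⋯ ∧ m_{r+1}) = Σ_i Σ_σ (−1)^i sign(σ) · ψ₁(m_{σ(1)})⋯ψ_{i−1}(m_{σ(i−1)})·ψ_i(m_{σ(i+1)})⋯ψ_r(m_{σ(r+1)}) · m_i, where σ runs over permutations of {1,…,r+1} fixing i. Then the image of Ψ is contained in the kernel of ψ, i.e. ψ_s(Ψ(m₁ ∧ ⋯ ∧ m_{r+1})) = 0 for every s = 1,…,r and all m₁,…,m_{r+1} ∈ M. -/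
/-!
For a functional `φ₀`, let `A` be the `(r+1) × (r+1)` matrix `A l k = φ_k(m_l)` of
`(φ₀, ψ₁, …, ψ_r)` against `m`. Then `φ₀(Ψ(m₁ ∧ ⋯ ∧ m_{r+1})) = -det A`: the permutations `τ`
with `τ 0 = i` are exactly the `σ * (cycleRange i)⁻¹` with `σ i = i`, so grouping the Leibniz
expansion of `det A` by `τ 0` reproduces the defining sum of `Ψ` term by term. For `φ₀ = ψ_s`
two columns of `A` agree, so `det A = 0`.
-/

/-- The iterated contraction `Ψ = ψ₁ ∧ ⋯ ∧ ψ_r : ⋀^{r+1} M → M`, evaluated on the pure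
wedge `m₁ ∧ ⋯ ∧ m_{r+1}`, given by the explicit formula
`Ψ(m₁ ∧ ⋯ ∧ m_{r+1}) = Σ_i Σ_σ (−1)^i sign(σ) · ψ₁(m_{σ(1)})⋯ψ_{i−1}(m_{σ(i−1)})·
ψ_i(m_{σ(i+1)})⋯ψ_r(m_{σ(r+1)}) · m_i`, where `σ` runs over the permutations of
`{1,…,r+1}` fixing `i`. -/
noncomputable def iterContraction {R : Type*} [CommRing R] {M : Type*} [AddCommGroup M]
    [Module R M] {r : ℕ} (ψ : Fin r → (M →ₗ[R] R)) (m : Fin (r + 1) → M) : M :=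
  ∑ i : Fin (r + 1), ∑ σ : {σ : Equiv.Perm (Fin (r + 1)) // σ i = i},
    (((-1 : ℤ) ^ ((i : ℕ) + 1) * (Equiv.Perm.sign σ.1 : ℤ)) •
      ((∏ j : Fin r, ψ j (m (σ.1 (i.succAbove j)))) • m i))

open Equiv Finset Matrix

def Fin.stabilizerEquivPermZeroEq {n : ℕ} (i : Fin (n + 1)) :
    {σ : Perm (Fin (n + 1)) // σ i = i} ≃ {τ : Perm (Fin (n + 1)) // τ 0 = i} :=
  (Equiv.mulRight (Fin.cycleRange i)⁻¹).subtypeEquiv fun σ => by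
    simp [Perm.mul_apply, Perm.inv_def]

theorem Fin.sign_mul_cycleRange_inv {n : ℕ} (σ : Perm (Fin n)) (i : Fin n) :
    Perm.sign (σ * (Fin.cycleRange i)⁻¹) = (-1) ^ (i : ℕ) * Perm.sign σ := by
  simp [Fin.sign_cycleRange, mul_comm]

def evalMatrix {R M : Type*} [Semiring R] [AddCommMonoid M] [Module R M] {n : ℕ}
    (φ : Fin n → M →ₗ[R] R) (m : Fin n → M) : Matrix (Fin n) (Fin n) R :=
  Matrix.of fun l k => φ k (m l)

theorem prod_evalMatrix_cons_mul_cycleRange_inv {R M : Type*} [CommSemiring R]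
    [AddCommMonoid M] [Module R M] {r : ℕ} (φ₀ : M →ₗ[R] R) (ψ : Fin r → M →ₗ[R] R)
    (m : Fin (r + 1) → M) (i : Fin (r + 1))
    {σ : Perm (Fin (r + 1))} (hσ : σ i = i) :
    ∏ l, evalMatrix (Fin.cons φ₀ ψ) m ((σ * (Fin.cycleRange i)⁻¹) l) l =
      φ₀ (m i) * ∏ j, ψ j (m (σ (i.succAbove j))) := by
  simp [Fin.prod_univ_succ, evalMatrix, Perm.mul_apply, Perm.inv_def, hσ]

theorem map_iterContraction_eq_neg_det {R M : Type*} [CommRing R] [AddCommGroup M]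
    [Module R M] {r : ℕ} (φ₀ : M →ₗ[R] R) (ψ : Fin r → M →ₗ[R] R)
    (m : Fin (r + 1) → M) :
    φ₀ (iterContraction ψ m) = -(evalMatrix (Fin.cons φ₀ ψ) m).det := by
  classical
  rw [det_apply', ← Fintype.sum_fiberwise (fun τ : Perm (Fin (r + 1)) => τ 0),
    iterContraction, map_sum, ← sum_neg_distrib]
  refine sum_congr rfl fun i _ => ?_
  rw [map_sum, ← sum_neg_distrib]
  refine Fintype.sum_equiv (Fin.stabilizerEquivPermZeroEq i) _ _ fun ⟨σ, hσ⟩ => ?_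
  change _ = -(((Perm.sign (σ * (Fin.cycleRange i)⁻¹) : ℤ) : R) *
    ∏ l, evalMatrix (Fin.cons φ₀ ψ) m ((σ * (Fin.cycleRange i)⁻¹) l) l)
  rw [Fin.sign_mul_cycleRange_inv, prod_evalMatrix_cons_mul_cycleRange_inv φ₀ ψ m i hσ,
    map_zsmul, map_smul, smul_eq_mul, zsmul_eq_mul]
  push_cast
  ring

/-- The image of the iterated contraction `Ψ = ψ₁ ∧ ⋯ ∧ ψ_r` is contained in the kernel of
`ψ = ψ₁ ⊕ ⋯ ⊕ ψ_r : M → R^r`: each `ψ_s` kills every value of `Ψ` on pure wedges. -/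
theorem contraction_image_subset_ker {R : Type*} [CommRing R] {M : Type*} [AddCommGroup M]
    [Module R M] (r : ℕ) (ψ : Fin r → (M →ₗ[R] R)) (s : Fin r) (m : Fin (r + 1) → M) :
    ψ s (iterContraction ψ m) = 0 := by
  rw [map_iterContraction_eq_neg_det, neg_eq_zero]
  exact det_zero_of_column_eq (Fin.succ_ne_zero s).symm fun l => by simp [evalMatrix]
end

section
/- Let R be a commutative ring and M = A ⊕ B a direct sum of R-modules where B is free of rank r with basis b₁,…,b_r. Let ψ₁,…,ψ_r ∈ Hom_R(M,R) be the maps that kill A and are dual to the basis of B (ψ_i(b_j) = δ_{ij}). Then the iterated contraction Ψ = ψ₁∧⋯∧ψ_r : ⋀^{r+1}M → M maps ⋀^{r+1}M surjectively onto A; in particular, under the canonical decomposition ⋀^{r+1}M ≅ ⊕_{p+q=r+1} (⋀^p A ⊗ ⋀^q B), Ψ carries the summand A ⊗ ⋀^r B isomorphically onto A (up to sign) and kills all other summands. -/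
open Equiv Finset Matrix

namespace Fin

def permEquivFixing {r : ℕ} (i : Fin (r + 1)) :
    Perm (Fin r) ≃ {σ : Perm (Fin (r + 1)) // σ i = i} :=
  ((finSuccAboveEquiv i).permCongr.trans (Perm.subtypeEquivSubtypePerm (· ≠ i))).trans
    (subtypeEquivRight (by simp))

theorem sign_permEquivFixing {r : ℕ} (i : Fin (r + 1)) (τ : Perm (Fin r)) :
    Perm.sign (permEquivFixing i τ).1 = Perm.sign τ := by
  simp [permEquivFixing, Perm.subtypeEquivSubtypePerm]

theorem permEquivFixing_apply_succAbove {r : ℕ} (i : Fin (r + 1)) (τ : Perm (Fin r))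
    (j : Fin r) : (permEquivFixing i τ).1 (i.succAbove j) = i.succAbove (τ j) := by
  simp only [permEquivFixing, Perm.subtypeEquivSubtypePerm, trans_apply, coe_fn_mk,
    subtypeEquivRight_apply_coe]
  rw [Perm.ofSubtype_apply_of_mem (p := (· ≠ i)) _ (succAbove_ne i j),
    ← finSuccAboveEquiv_apply, permCongr_apply, symm_apply_apply, finSuccAboveEquiv_apply]

end Fin

namespace Matrix

variable {R : Type*} [CommRing R] {r : ℕ} (g : Matrix (Fin (r + 1)) (Fin r) R)

theorem det_submatrix_succAbove_eq_sum_fixing (i : Fin (r + 1)) :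
    (g.submatrix i.succAbove id).det =
      ∑ σ : {σ : Perm (Fin (r + 1)) // σ i = i},
        (Perm.sign σ.1 : R) * ∏ j, g (σ.1 (i.succAbove j)) j := by
  rw [det_apply']
  refine Fintype.sum_equiv (Fin.permEquivFixing i) _ _ fun τ => ?_
  simp [Fin.sign_permEquivFixing, Fin.permEquivFixing_apply_succAbove]

theorem det_submatrix_succAbove_eq_zero_of_row_eq_zero {i x : Fin (r + 1)} (hxi : x ≠ i)
    (hx : ∀ j, g x j = 0) : (g.submatrix i.succAbove id).det = 0 := by
  obtain ⟨k, rfl⟩ := Fin.exists_succAbove_eq hxi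
  exact det_eq_zero_of_row_eq_zero k hx

/-- Laplace expansion along column `0` of the square matrix `[g_t | g]` with a repeated column. -/
theorem sum_neg_one_pow_mul_det_submatrix_succAbove_eq_zero (t : Fin r) :
    ∑ i : Fin (r + 1), (-1) ^ (i : ℕ) * g i t * (g.submatrix i.succAbove id).det = 0 := by
  let P : Matrix (Fin (r + 1)) (Fin (r + 1)) R := of fun x => Fin.cons (g x t) (g x)
  calc _ = P.det := by rw [det_succ_column_zero]; rfl
    _ = 0 := det_zero_of_column_eq (Fin.succ_ne_zero t).symm fun k => rfl

end Matrix

section iterContraction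

variable {R M : Type*} [CommRing R] [AddCommGroup M] [Module R M] {r : ℕ}
  (ψ : Fin r → (M →ₗ[R] R)) (m : Fin (r + 1) → M)

def pairingMatrix : Matrix (Fin (r + 1)) (Fin r) R := of fun x j => ψ j (m x)

theorem iterContraction_eq_sum_det : iterContraction ψ m =
    ∑ i : Fin (r + 1),
      ((-1) ^ ((i : ℕ) + 1) * ((pairingMatrix ψ m).submatrix i.succAbove id).det) • m i := by
  refine sum_congr rfl fun i _ => ?_
  rw [det_submatrix_succAbove_eq_sum_fixing, mul_sum, sum_smul]
  refine sum_congr rfl fun σ _ => ?_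
  rw [← Int.cast_smul_eq_zsmul R, smul_smul]
  push_cast
  simp only [pairingMatrix, of_apply, mul_assoc]

theorem apply_iterContraction (t : Fin r) : ψ t (iterContraction ψ m) = 0 := by
  rw [iterContraction_eq_sum_det, map_sum]
  calc _ = -∑ i : Fin (r + 1), (-1) ^ (i : ℕ) * pairingMatrix ψ m i t *
          ((pairingMatrix ψ m).submatrix i.succAbove id).det := by
        rw [← sum_neg_distrib]
        refine sum_congr rfl fun i _ => ?_
        simp only [map_smul, smul_eq_mul, pairingMatrix, of_apply]
        ring
    _ = 0 := by rw [sum_neg_one_pow_mul_det_submatrix_succAbove_eq_zero, neg_zero]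

theorem iterContraction_eq_zero_of_apply_eq_zero {i₁ i₂ : Fin (r + 1)} (hne : i₁ ≠ i₂)
    (h₁ : ∀ j, ψ j (m i₁) = 0) (h₂ : ∀ j, ψ j (m i₂) = 0) : iterContraction ψ m = 0 := by
  rw [iterContraction_eq_sum_det]
  refine sum_eq_zero fun i _ => ?_
  obtain ⟨x, hxi, hx⟩ : ∃ x, x ≠ i ∧ ∀ j, ψ j (m x) = 0 := by
    by_cases h : i₁ = i
    · exact ⟨i₂, h ▸ hne.symm, h₂⟩
    · exact ⟨i₁, h, h₁⟩
  rw [det_submatrix_succAbove_eq_zero_of_row_eq_zero _ hxi hx, mul_zero, zero_smul]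

theorem iterContraction_cons_of_apply_eq_zero (x : M) (v : Fin r → M) (hx : ∀ j, ψ j x = 0) :
    iterContraction ψ (Fin.cons x v) = -((of fun k j => ψ j (v k)).det • x) := by
  have hrow : ∀ t : Fin r,
      ((pairingMatrix ψ (Fin.cons x v)).submatrix t.succ.succAbove id).det = 0 := fun t =>
    det_submatrix_succAbove_eq_zero_of_row_eq_zero _ (Fin.succ_ne_zero t).symm hx
  have hhead : (pairingMatrix ψ (Fin.cons x v)).submatrix (0 : Fin (r + 1)).succAbove id =
      of fun k j => ψ j (v k) := by
    ext k j
    simp [pairingMatrix]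
  rw [iterContraction_eq_sum_det, Fin.sum_univ_succ,
    sum_eq_zero fun t _ => by rw [hrow t, mul_zero, zero_smul], add_zero, hhead]
  simp

end iterContraction

/-- Let `M = A ⊕ B` with `B` free of rank `r` (realized as `B = R^r` with its standard
basis), and let `ψ₁,…,ψ_r` be the functionals killing `A` and dual to the basis of `B`.
Then the iterated contraction `Ψ = ψ₁∧⋯∧ψ_r : ⋀^{r+1}M → M` maps onto `A`:
(1) every value of `Ψ` lies in `A`; (2) every element of `A` is a value of `Ψ`;
(3) on the summand `A ⊗ ⋀^r B` (spanned by wedges `a ∧ b₁ ∧ ⋯ ∧ b_r`), `Ψ` is, up to a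
sign, the identity of `A`; (4) `Ψ` kills the summands `⋀^p A ⊗ ⋀^q B` with `p ≥ 2`
(wedges with two entries from `A`). -/
theorem contraction_onto_complement
    {R : Type*} [CommRing R] {A : Type*} [AddCommGroup A] [Module R A] (r : ℕ)
    (ψ : Fin r → ((A × (Fin r → R)) →ₗ[R] R))
    (hψ : ∀ i, ψ i = (LinearMap.proj i) ∘ₗ (LinearMap.snd R A (Fin r → R))) :
    (∀ m : Fin (r + 1) → A × (Fin r → R), (iterContraction ψ m).2 = 0) ∧
    (∀ a : A, ∃ m : Fin (r + 1) → A × (Fin r → R), iterContraction ψ m = (a, 0)) ∧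
    (∃ ε : ℤ, (ε = 1 ∨ ε = -1) ∧ ∀ a : A,
      iterContraction ψ
        (Fin.cons (a, 0) (fun j : Fin r => ((0 : A), Pi.single j (1 : R)))) = ε • ((a, 0) : A × (Fin r → R))) ∧
    (∀ m : Fin (r + 1) → A × (Fin r → R),
      (∃ i₁ i₂ : Fin (r + 1), i₁ ≠ i₂ ∧ (m i₁).2 = 0 ∧ (m i₂).2 = 0) →
        iterContraction ψ m = 0) := by
  have hψ_apply : ∀ j x, ψ j x = x.2 j := fun j x => by rw [hψ]; rfl
  have hbasis : of (fun k j => ψ j (((0 : A), Pi.single k (1 : R)) : A × (Fin r → R))) = 1 := by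
    ext k j
    simp [hψ_apply, Pi.single_apply, one_apply, eq_comm]
  have hwedge : ∀ a : A,
      iterContraction ψ (Fin.cons (a, 0) (fun j : Fin r => ((0 : A), Pi.single j (1 : R)))) =
        -((a, 0) : A × (Fin r → R)) := by
    intro a
    rw [iterContraction_cons_of_apply_eq_zero ψ _ _ (by simp [hψ_apply]), hbasis, det_one,
      one_smul]
  refine ⟨fun m => funext fun t => ?_, fun a => ⟨_, (hwedge (-a)).trans (by simp)⟩,
    ⟨-1, Or.inr rfl, fun a => by rw [hwedge, neg_one_smul]⟩, ?_⟩
  · simpa [hψ_apply] using apply_iterContraction ψ m t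
  · rintro m ⟨i₁, i₂, hne, h₁, h₂⟩
    exact iterContraction_eq_zero_of_apply_eq_zero ψ m hne (by simp [hψ_apply, h₁])
      (by simp [hψ_apply, h₂])
end
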